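/- arXiv:2102.05591 — 2 statements merged into one kernel-verified Lean document; each statement's English description precedes it below -/
import Mathlib

section
/- For positive integers m₁, m₂, the weighted sum ∑_{k=0}^{m₁-1} k · (m₂)_{m₁-1-k} (1-m₂)_k / ((m₁-1-k)! · k!) equals (1-m₂)(m₁-1). -/
/-- Pochhammer symbol (rising factorial) `(a)_k = a(a+1)⋯(a+k-1)` over ℝ. -/
noncomputable def poch (a : ℝ) (k : ℕ) : ℝ := (ascPochhammer ℝ k).eval a

lemma poch_zero (a : ℝ) : poch a 0 = 1 := by simp [poch]

lemma poch_succ_right (a : ℝ) (k : ℕ) : poch a (k+1) = poch a k * (a + k) := by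
  simp [poch, ascPochhammer_succ_right, Polynomial.eval_mul]

lemma poch_succ_left (a : ℝ) (k : ℕ) : poch a (k+1) = a * poch (a+1) k := by
  simp [poch, ascPochhammer_succ_left, Polynomial.eval_comp, Polynomial.eval_mul]

lemma poch_one (n : ℕ) : poch 1 n = n.factorial := by
  induction n with
  | zero => simp [poch]
  | succ k ih =>
    rw [poch_succ_right, ih, Nat.factorial_succ]
    push_cast
    ring

lemma poch_two (n : ℕ) : poch 2 n = (n+1).factorial := by
  have h := poch_succ_left 1 n
  rw [poch_one] at h
  norm_num at h
  exact h.symm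

lemma vand (b c : ℝ) (n : ℕ) :
    ∑ k ∈ Finset.range (n+1), (n.choose k : ℝ) * (poch b (n-k) * poch c k)
      = poch (b+c) n := by
  induction n with
  | zero => simp [poch]
  | succ n ih =>
    rw [Finset.sum_range_succ']
    have h1 : ∀ k ∈ Finset.range (n+1),
        ((n+1).choose (k+1) : ℝ) * (poch b (n+1-(k+1)) * poch c (k+1))
        = (n.choose k : ℝ) * (poch b (n-k) * poch c (k+1))
          + (n.choose (k+1) : ℝ) * (poch b (n-k) * poch c (k+1)) := by
      intro k _
      have : n+1-(k+1) = n-k := by omega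
      rw [this, Nat.choose_succ_succ]
      push_cast
      ring
    rw [Finset.sum_congr rfl h1, Finset.sum_add_distrib]
    -- handle the shifted sum
    have hB : ∑ k ∈ Finset.range (n+1),
        (n.choose (k+1) : ℝ) * (poch b (n-k) * poch c (k+1))
        = (∑ j ∈ Finset.range (n+1), (n.choose j : ℝ) * (poch b (n+1-j) * poch c j))
          - (n.choose 0 : ℝ) * (poch b (n+1) * poch c 0) := by
      have h2 : ∑ j ∈ Finset.range (n+2), (n.choose j : ℝ) * (poch b (n+1-j) * poch c j)
          = ∑ k ∈ Finset.range (n+1), (n.choose (k+1) : ℝ) * (poch b (n+1-(k+1)) * poch c (k+1))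
            + (n.choose 0 : ℝ) * (poch b (n+1-0) * poch c 0) :=
        Finset.sum_range_succ' _ _
      have h3 : ∑ j ∈ Finset.range (n+2), (n.choose j : ℝ) * (poch b (n+1-j) * poch c j)
          = ∑ j ∈ Finset.range (n+1), (n.choose j : ℝ) * (poch b (n+1-j) * poch c j) := by
        rw [Finset.sum_range_succ, Nat.choose_succ_self]
        simp
      have h4 : ∀ k, n+1-(k+1) = n-k := fun k => by omega
      simp only [h4, Nat.sub_zero] at h2
      rw [h3] at h2
      linarith [h2]
    rw [hB]
    have h5 : ∀ j ∈ Finset.range (n+1),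
        (n.choose j : ℝ) * (poch b (n-j) * poch c (j+1))
          + (n.choose j : ℝ) * (poch b (n+1-j) * poch c j)
        = (b + c + n) * ((n.choose j : ℝ) * (poch b (n-j) * poch c j)) := by
      intro j hj
      have hjn : j ≤ n := by simpa [Nat.lt_succ_iff] using hj
      have e1 : n+1-j = (n-j)+1 := by omega
      rw [e1, poch_succ_right b (n-j), poch_succ_right c j]
      have e2 : ((n - j : ℕ) : ℝ) = (n : ℝ) - j := by
        push_cast [Nat.cast_sub hjn]; ring
      rw [e2]
      ring
    have hsum : (∑ x ∈ Finset.range (n+1), (n.choose x : ℝ) * (poch b (n-x) * poch c (x+1)))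
        + ∑ j ∈ Finset.range (n+1), (n.choose j : ℝ) * (poch b (n+1-j) * poch c j)
        = poch (b+c) n * (b + c + n) := by
      rw [← Finset.sum_add_distrib, Finset.sum_congr rfl h5, ← Finset.mul_sum, ih, mul_comm]
    rw [poch_succ_right (b+c) n]
    simp only [Nat.choose_zero_right, Nat.cast_one, Nat.sub_zero]
    linarith [hsum]

theorem stmt4 (m₁ m₂ : ℕ) (hm₁ : 0 < m₁) (hm₂ : 0 < m₂) :
    ∑ k ∈ Finset.range m₁,
      (k : ℝ) * poch m₂ (m₁ - 1 - k) * poch (1 - m₂) k /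
        ((Nat.factorial (m₁ - 1 - k) : ℝ) * (Nat.factorial k : ℝ)) =
      (1 - (m₂ : ℝ)) * ((m₁ : ℝ) - 1) := by
  obtain ⟨n, rfl⟩ : ∃ n, m₁ = n + 1 := ⟨m₁ - 1, by omega⟩
  match n with
  | 0 => simp
  | m + 1 =>
    set b : ℝ := (m₂ : ℝ)
    set c : ℝ := 1 - (m₂ : ℝ)
    rw [Finset.sum_range_succ']
    have hz : ((0:ℕ) : ℝ) * poch b (m+1+1-1-0) * poch c 0 /
        ((Nat.factorial (m+1+1-1-0) : ℝ) * (Nat.factorial 0 : ℝ)) = 0 := by simp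
    rw [hz, add_zero]
    have key : ∀ j ∈ Finset.range (m+1),
        ((j+1 : ℕ) : ℝ) * poch b (m+1+1-1-(j+1)) * poch c (j+1) /
          ((Nat.factorial (m+1+1-1-(j+1)) : ℝ) * (Nat.factorial (j+1) : ℝ))
        = (c / (Nat.factorial m : ℝ)) *
            ((m.choose j : ℝ) * (poch b (m-j) * poch (c+1) j)) := by
      intro j hj
      have hjm : j ≤ m := by simpa [Nat.lt_succ_iff] using hj
      have e1 : m+1+1-1-(j+1) = m - j := by omega
      rw [e1, poch_succ_left c j, Nat.factorial_succ]
      have hfact : ((m.choose j : ℝ)) * (Nat.factorial j : ℝ) * (Nat.factorial (m-j) : ℝ)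
          = (Nat.factorial m : ℝ) := by
        exact_mod_cast congrArg (Nat.cast : ℕ → ℝ)
          (Nat.choose_mul_factorial_mul_factorial hjm)
      have h1 : (Nat.factorial (m-j) : ℝ) ≠ 0 := Nat.cast_ne_zero.mpr (Nat.factorial_ne_zero _)
      have h2 : (Nat.factorial j : ℝ) ≠ 0 := Nat.cast_ne_zero.mpr (Nat.factorial_ne_zero _)
      have h3 : (Nat.factorial m : ℝ) ≠ 0 := Nat.cast_ne_zero.mpr (Nat.factorial_ne_zero _)
      have h4 : ((j:ℝ) + 1) ≠ 0 := by positivity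
      have hC0 : (m.choose j : ℝ) ≠ 0 :=
        Nat.cast_ne_zero.mpr (Nat.choose_pos hjm).ne'
      rw [← hfact]
      push_cast
      field_simp
    rw [Finset.sum_congr rfl key, ← Finset.mul_sum, vand b (c+1) m]
    have hbc : b + (c+1) = 2 := by ring
    rw [hbc, poch_two]
    have h3 : (Nat.factorial m : ℝ) ≠ 0 := Nat.cast_ne_zero.mpr (Nat.factorial_ne_zero _)
    rw [Nat.factorial_succ]
    push_cast
    field_simp
    ring
end

section
/- Let f(r) = (4 (c)^{(u+1)/2} / (u-1)!) · r^u · K_{u-1}(2√c · r) for r > 0, where c > 0 and u is a positive integer. Then ∫₀^r f(x) dx = 1 - (2/(u-1)!) · (√c · r)^u · K_u(2√c · r). -/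
open Real MeasureTheory

/-- Modified Bessel function of the second kind of order `ν`, via the
standard integral representation (valid for `x > 0`). -/
noncomputable def besselK (ν x : ℝ) : ℝ :=
  ∫ t in Set.Ioi (0 : ℝ), Real.exp (-x * Real.cosh t) * Real.cosh (ν * t)


open Set Filter Topology

lemma cosh_le_exp_abs (y : ℝ) : Real.cosh y ≤ Real.exp |y| := by
  rw [← Real.cosh_abs, Real.cosh_eq]
  nlinarith [Real.exp_pos (-|y|), Real.exp_le_exp.2 (neg_abs_le y),
    Real.exp_le_exp.2 (le_abs_self y), Real.exp_pos |y|]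

lemma abs_sinh_le_exp_abs (y : ℝ) : |Real.sinh y| ≤ Real.exp |y| := by
  rw [Real.sinh_eq]
  have h1 : Real.exp y ≤ Real.exp |y| := Real.exp_le_exp.2 (le_abs_self y)
  have h2 : Real.exp (-y) ≤ Real.exp |y| := Real.exp_le_exp.2 (neg_le_abs y)
  have := Real.exp_pos y; have := Real.exp_pos (-y)
  rw [abs_div, abs_of_nonneg (by norm_num : (0:ℝ) ≤ 2), div_le_iff₀ (by norm_num), abs_sub_le_iff]
  constructor <;> nlinarith

lemma half_exp_le_cosh (y : ℝ) : Real.exp y / 2 ≤ Real.cosh y := by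
  rw [Real.cosh_eq]; nlinarith [Real.exp_pos (-y)]

lemma tendsto_master (x a : ℝ) (hx : 0 < x) :
    Tendsto (fun t => Real.exp (-x * Real.cosh t + a * t)) atTop (𝓝 0) := by
  have hmul : Tendsto (fun t : ℝ => t * (x/2 * (Real.exp t / t) - a)) atTop atTop := by
    apply Tendsto.atTop_mul_atTop₀ tendsto_id
    apply tendsto_atTop_add_const_right
    have := (Real.tendsto_exp_div_pow_atTop 1).const_mul_atTop (by positivity : (0:ℝ) < x/2)
    simpa using this
  have hmul' : Tendsto (fun t : ℝ => x/2 * Real.exp t - a*t) atTop atTop := by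
    apply hmul.congr'
    filter_upwards [eventually_gt_atTop (0:ℝ)] with t ht
    field_simp
  have h0 : Tendsto (fun t : ℝ => a*t - x/2 * Real.exp t) atTop atBot := by
    have := tendsto_neg_atTop_atBot.comp hmul'
    apply this.congr
    intro t; simp [Function.comp]
  have h1 : Tendsto (fun t : ℝ => -x * Real.cosh t + a*t) atTop atBot :=
    tendsto_atBot_mono (fun t => by nlinarith [half_exp_le_cosh t]) h0
  exact Real.tendsto_exp_atBot.comp h1

lemma master_integrable (x a : ℝ) (hx : 0 < x) :
    IntegrableOn (fun t => Real.exp (-x * Real.cosh t + a * t)) (Ioi (0:ℝ)) := by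
  apply integrable_of_isBigO_exp_neg (b := 1) one_pos
  · exact (by continuity : Continuous fun t => Real.exp (-x * Real.cosh t + a * t)).continuousOn
  · have h2 : Tendsto (fun t => Real.exp (-x * Real.cosh t + a*t) / Real.exp (-1*t)) atTop (𝓝 0) := by
      have h3 := tendsto_master x (a+1) hx
      apply h3.congr
      intro t
      rw [eq_div_iff (Real.exp_ne_zero _), ← Real.exp_add]
      congr 1
      ring
    exact ((Asymptotics.isLittleO_iff_tendsto fun t h =>
      absurd h (Real.exp_ne_zero _)).2 h2).isBigO

lemma integrable_exp_cosh_mul {x a : ℝ} (hx : 0 < x) {f : ℝ → ℝ} (hf : Continuous f)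
    (hb : ∀ t, 0 ≤ t → |f t| ≤ Real.exp (a * t)) :
    IntegrableOn (fun t => Real.exp (-x * Real.cosh t) * f t) (Ioi (0:ℝ)) := by
  apply (master_integrable x a hx).mono'
    (((by continuity : Continuous fun t => Real.exp (-x * Real.cosh t)).mul hf).aestronglyMeasurable)
  filter_upwards [ae_restrict_mem measurableSet_Ioi] with t ht
  have h0 : (0:ℝ) ≤ t := le_of_lt ht
  rw [Real.norm_eq_abs, Pi.mul_apply, abs_mul, abs_of_nonneg (Real.exp_pos _).le, Real.exp_add]
  exact mul_le_mul_of_nonneg_left (hb t h0) (Real.exp_pos _).le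

lemma abs_cosh_mul_le (ν t : ℝ) (ht : 0 ≤ t) : |Real.cosh (ν * t)| ≤ Real.exp (|ν| * t) := by
  rw [abs_of_nonneg (Real.cosh_pos _).le]
  calc Real.cosh (ν * t) ≤ Real.exp |ν * t| := cosh_le_exp_abs _
  _ = Real.exp (|ν| * t) := by rw [abs_mul, abs_of_nonneg ht]

lemma integrable_besselK_integrand (ν : ℝ) {x : ℝ} (hx : 0 < x) :
    IntegrableOn (fun t => Real.exp (-x * Real.cosh t) * Real.cosh (ν * t)) (Ioi (0:ℝ)) :=
  integrable_exp_cosh_mul hx (by continuity) (abs_cosh_mul_le ν)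

lemma integrable_cosh_cosh (ν : ℝ) {x : ℝ} (hx : 0 < x) :
    IntegrableOn (fun t => Real.exp (-x * Real.cosh t) * (Real.cosh t * Real.cosh (ν * t)))
      (Ioi (0:ℝ)) := by
  refine integrable_exp_cosh_mul (a := 1 + |ν|) hx (by continuity) (fun t ht => ?_)
  rw [abs_mul, add_mul, Real.exp_add, one_mul]
  refine mul_le_mul ?_ (abs_cosh_mul_le ν t ht) (abs_nonneg _) (Real.exp_pos _).le
  rw [abs_of_nonneg (Real.cosh_pos _).le]
  calc Real.cosh t ≤ Real.exp |t| := cosh_le_exp_abs t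
  _ = Real.exp t := by rw [abs_of_nonneg ht]

lemma integrable_sinh_sinh (ν : ℝ) {x : ℝ} (hx : 0 < x) :
    IntegrableOn (fun t => Real.exp (-x * Real.cosh t) * (Real.sinh t * Real.sinh (ν * t)))
      (Ioi (0:ℝ)) := by
  refine integrable_exp_cosh_mul (a := 1 + |ν|) hx (by continuity) (fun t ht => ?_)
  rw [abs_mul, add_mul, Real.exp_add, one_mul]
  refine mul_le_mul ?_ ?_ (abs_nonneg _) (Real.exp_pos _).le
  · calc |Real.sinh t| ≤ Real.exp |t| := abs_sinh_le_exp_abs t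
    _ = Real.exp t := by rw [abs_of_nonneg ht]
  · calc |Real.sinh (ν * t)| ≤ Real.exp |ν * t| := abs_sinh_le_exp_abs _
    _ = Real.exp (|ν| * t) := by rw [abs_mul, abs_of_nonneg ht]

lemma besselK_nonneg (ν : ℝ) (x : ℝ) : 0 ≤ besselK ν x := by
  refine setIntegral_nonneg measurableSet_Ioi (fun t _ => ?_)
  exact mul_nonneg (Real.exp_pos _).le (Real.cosh_pos _).le

lemma besselK_hasDerivAt (ν : ℝ) {x : ℝ} (hx : 0 < x) :
    HasDerivAt (besselK ν)
      (-∫ t in Ioi (0:ℝ), Real.exp (-x * Real.cosh t) * (Real.cosh t * Real.cosh (ν * t))) x := by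
  have key := hasDerivAt_integral_of_dominated_loc_of_deriv_le (μ := volume.restrict (Ioi (0:ℝ)))
    (F := fun y t => Real.exp (-y * Real.cosh t) * Real.cosh (ν * t))
    (F' := fun y t => -(Real.exp (-y * Real.cosh t) * (Real.cosh t * Real.cosh (ν * t))))
    (x₀ := x) (s := Metric.ball x (x/2))
    (bound := fun t => Real.exp (-(x/2) * Real.cosh t) * (Real.cosh t * Real.exp (|ν| * t)))
    (Metric.ball_mem_nhds x (by positivity))
    (Eventually.of_forall fun y => (by continuity :
      Continuous fun t => Real.exp (-y * Real.cosh t) * Real.cosh (ν * t)).aestronglyMeasurable)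
    (integrable_besselK_integrand ν hx)
    ((by continuity :
      Continuous fun t => -(Real.exp (-x * Real.cosh t) * (Real.cosh t * Real.cosh (ν * t)))).aestronglyMeasurable)
    ?_ ?_ ?_
  · have := key.2
    rwa [integral_neg] at this
  · filter_upwards [ae_restrict_mem measurableSet_Ioi] with t ht y hy
    have h0 : (0:ℝ) ≤ t := le_of_lt ht
    have hy2 : x/2 ≤ y := by
      have := abs_lt.1 (mem_ball_iff_norm.1 hy)
      linarith [this.1]
    rw [norm_neg, Real.norm_eq_abs, abs_mul, abs_of_nonneg (Real.exp_pos _).le, abs_mul,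
      abs_of_nonneg (Real.cosh_pos _).le]
    refine mul_le_mul ?_ ?_ (by positivity) (Real.exp_pos _).le
    · apply Real.exp_le_exp.2
      have := Real.cosh_pos t
      nlinarith
    · exact mul_le_mul_of_nonneg_left (abs_cosh_mul_le ν t h0) (Real.cosh_pos _).le
  · refine (integrable_exp_cosh_mul (a := 1 + |ν|) (by positivity) (by continuity)
      (fun t ht => ?_))
    rw [abs_mul, add_mul, Real.exp_add, one_mul]
    refine mul_le_mul ?_ ?_ (abs_nonneg _) (Real.exp_pos _).le
    · rw [abs_of_nonneg (Real.cosh_pos _).le]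
      calc Real.cosh t ≤ Real.exp |t| := cosh_le_exp_abs t
      _ = Real.exp t := by rw [abs_of_nonneg ht]
    · rw [abs_of_nonneg (Real.exp_pos _).le]
  · filter_upwards [ae_restrict_mem measurableSet_Ioi] with t ht y hy
    have h1 : HasDerivAt (fun y : ℝ => -y * Real.cosh t) (-Real.cosh t) y := by
      simpa using ((hasDerivAt_id y).neg.mul_const (Real.cosh t))
    have h2 := (h1.exp).mul_const (Real.cosh (ν * t))
    exact h2.congr_deriv (by ring)

lemma bessel_parts (ν : ℝ) {x : ℝ} (hx : 0 < x) :
    x * ∫ t in Ioi (0:ℝ), Real.exp (-x * Real.cosh t) * (Real.sinh t * Real.sinh (ν * t))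
      = ν * besselK ν x := by
  set φ : ℝ → ℝ := fun t => Real.exp (-x * Real.cosh t) * Real.sinh (ν * t) with hφ
  set φ' : ℝ → ℝ := fun t =>
    ν * (Real.exp (-x * Real.cosh t) * Real.cosh (ν * t))
      - x * (Real.exp (-x * Real.cosh t) * (Real.sinh t * Real.sinh (ν * t))) with hφ'
  have hderiv : ∀ t ∈ Ici (0:ℝ), HasDerivAt φ (φ' t) t := by
    intro t _
    have h1 : HasDerivAt (fun t : ℝ => -x * Real.cosh t) (-x * Real.sinh t) t :=
      (Real.hasDerivAt_cosh t).const_mul (-x)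
    have h2 : HasDerivAt (fun t : ℝ => Real.sinh (ν * t)) (Real.cosh (ν * t) * ν) t := by
      simpa using (((hasDerivAt_id t).const_mul ν).sinh)
    have := (h1.exp).mul h2
    exact this.congr_deriv (by simp only [hφ']; ring)
  have hint : IntegrableOn φ' (Ioi (0:ℝ)) :=
    (((integrable_besselK_integrand ν hx).const_mul ν).sub
      ((integrable_sinh_sinh ν hx).const_mul x))
  have htend : Tendsto φ atTop (𝓝 0) := by
    refine squeeze_zero_norm' ?_ (tendsto_master x |ν| hx)
    · filter_upwards [eventually_ge_atTop (0:ℝ)] with t ht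
      rw [Real.norm_eq_abs, abs_mul, abs_of_nonneg (Real.exp_pos _).le, Real.exp_add]
      refine mul_le_mul_of_nonneg_left ?_ (Real.exp_pos _).le
      calc |Real.sinh (ν * t)| ≤ Real.exp |ν * t| := abs_sinh_le_exp_abs _
      _ = Real.exp (|ν| * t) := by rw [abs_mul, abs_of_nonneg ht]
  have h0 := integral_Ioi_of_hasDerivAt_of_tendsto' hderiv hint htend
  have hφ0 : φ 0 = 0 := by simp [hφ]
  rw [hφ0, sub_zero] at h0
  have hsplit : ∫ t in Ioi (0:ℝ), φ' t =
      ν * besselK ν x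
        - x * ∫ t in Ioi (0:ℝ), Real.exp (-x * Real.cosh t) * (Real.sinh t * Real.sinh (ν * t)) := by
    rw [hφ']
    rw [integral_sub (((integrable_besselK_integrand ν hx).const_mul ν))
      ((integrable_sinh_sinh ν hx).const_mul x)]
    rw [MeasureTheory.integral_const_mul, MeasureTheory.integral_const_mul]
    rfl
  rw [h0] at hsplit
  linarith [hsplit]

lemma key_hasDerivAt (n : ℕ) (hn : 1 ≤ n) {x : ℝ} (hx : 0 < x) :
    HasDerivAt (fun y => y ^ n * besselK n y) (-(x ^ n * besselK ((n:ℝ) - 1) x)) x := by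
  have hK := besselK_hasDerivAt n hx
  have hpow : HasDerivAt (fun y : ℝ => y ^ n) ((n:ℝ) * x ^ (n - 1)) x := by
    simpa using hasDerivAt_pow n x
  have hprod : HasDerivAt (fun y => y ^ n * besselK (n:ℝ) y) _ x := hpow.mul hK
  convert hprod using 1
  have hparts := bessel_parts (n:ℝ) hx
  have hxpow : (n:ℝ) * x ^ (n-1) * besselK n x
      = x ^ n * ∫ t in Ioi (0:ℝ),
          Real.exp (-x * Real.cosh t) * (Real.sinh t * Real.sinh ((n:ℝ) * t)) := by
    have hxn : x ^ n = x ^ (n - 1) * x := by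
      rw [← pow_succ]
      congr 1
      omega
    calc (n:ℝ) * x ^ (n-1) * besselK n x = x ^ (n-1) * ((n:ℝ) * besselK n x) := by ring
    _ = x ^ (n-1) * (x * ∫ t in Ioi (0:ℝ),
          Real.exp (-x * Real.cosh t) * (Real.sinh t * Real.sinh ((n:ℝ) * t))) := by rw [hparts]
    _ = x ^ n * ∫ t in Ioi (0:ℝ),
          Real.exp (-x * Real.cosh t) * (Real.sinh t * Real.sinh ((n:ℝ) * t)) := by
        rw [hxn]; ring
  have hcomb : besselK ((n:ℝ) - 1) x =
      (∫ t in Ioi (0:ℝ), Real.exp (-x * Real.cosh t) * (Real.cosh t * Real.cosh ((n:ℝ) * t)))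
      - ∫ t in Ioi (0:ℝ),
          Real.exp (-x * Real.cosh t) * (Real.sinh t * Real.sinh ((n:ℝ) * t)) := by
    rw [← integral_sub (integrable_cosh_cosh _ hx) (integrable_sinh_sinh _ hx)]
    unfold besselK
    apply setIntegral_congr_fun measurableSet_Ioi
    intro t _
    simp only
    rw [show ((n:ℝ) - 1) * t = (n:ℝ) * t - t from by ring, Real.cosh_sub]
    ring
  rw [hcomb, hxpow]
  ring

lemma gamma_integrand_integrable (n : ℕ) (hn : 1 ≤ n) :
    IntegrableOn (fun s : ℝ => Real.exp (-s) * s ^ (n-1)) (Ioi (0:ℝ)) := by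
  have h := Real.GammaIntegral_convergent (s := (n:ℝ)) (by positivity)
  apply h.congr_fun ?_ measurableSet_Ioi
  intro s hs
  have hcast : ((n:ℝ) - 1) = ((n-1 : ℕ) : ℝ) := by push_cast [Nat.cast_sub hn]; ring
  simp only [hcast, Real.rpow_natCast]

lemma gamma_int (n : ℕ) (hn : 1 ≤ n) :
    ∫ s in Ioi (0:ℝ), Real.exp (-s) * s ^ (n-1) = ((Nat.factorial (n-1)) : ℝ) := by
  have h := Real.Gamma_eq_integral (s := (n:ℝ)) (by positivity)
  have h2 : Real.Gamma (n:ℝ) = ((Nat.factorial (n-1)) : ℝ) := by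
    rw [show (n:ℝ) = ((n-1 : ℕ) : ℝ) + 1 by push_cast [Nat.cast_sub hn]; ring]
    exact Real.Gamma_nat_eq_factorial (n-1)
  rw [← h2, h]
  apply setIntegral_congr_fun measurableSet_Ioi
  intro s hs
  have hcast : ((n:ℝ) - 1) = ((n-1 : ℕ) : ℝ) := by push_cast [Nat.cast_sub hn]; ring
  simp only [hcast, Real.rpow_natCast]

lemma gamma_tail_tendsto (n : ℕ) (hn : 1 ≤ n) :
    Tendsto (fun a : ℝ => ∫ s in Ioi a, Real.exp (-s) * s ^ (n-1)) (𝓝[>] (0:ℝ))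
      (𝓝 ((Nat.factorial (n-1)) : ℝ)) := by
  have hsplit : ∀ a : ℝ, 0 < a →
      (∫ s in Ioi a, Real.exp (-s) * s ^ (n-1))
        = ((Nat.factorial (n-1)) : ℝ) - ∫ s in Ioc 0 a, Real.exp (-s) * s ^ (n-1) := by
    intro a ha
    have hu : Ioc (0:ℝ) a ∪ Ioi a = Ioi 0 := Ioc_union_Ioi_eq_Ioi ha.le
    have hint := gamma_integrand_integrable n hn
    have := setIntegral_union (f := fun s : ℝ => Real.exp (-s) * s ^ (n-1))
      Ioc_disjoint_Ioi_same measurableSet_Ioi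
      (hint.mono_set (by rw [← hu]; exact subset_union_left))
      (hint.mono_set (by rw [← hu]; exact subset_union_right))
    rw [hu, gamma_int n hn] at this
    linarith
  have htail : Tendsto (fun a : ℝ => ∫ s in Ioc (0:ℝ) a, Real.exp (-s) * s ^ (n-1))
      (𝓝[>] (0:ℝ)) (𝓝 0) := by
    refine squeeze_zero_norm' ?_ (tendsto_id.mono_left nhdsWithin_le_nhds)
    · filter_upwards [self_mem_nhdsWithin,
        Filter.eventually_iff_exists_mem.2 ⟨Iio (1:ℝ), nhdsWithin_le_nhds (Iio_mem_nhds one_pos),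
          fun y hy => hy⟩] with a ha ha1
      have ha' : (0:ℝ) < a := ha
      calc ‖∫ s in Ioc (0:ℝ) a, Real.exp (-s) * s ^ (n-1)‖ ≤ 1 * (volume (Ioc (0:ℝ) a)).toReal := by
            apply norm_setIntegral_le_of_norm_le_const
            · rw [Real.volume_Ioc]; exact ENNReal.ofReal_lt_top
            · intro s hs
              rw [Real.norm_eq_abs, abs_mul, abs_of_nonneg (Real.exp_pos _).le,
                abs_of_nonneg (pow_nonneg hs.1.le _)]
              have h1 : Real.exp (-s) ≤ 1 := Real.exp_le_one_iff.2 (by linarith [hs.1])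
              have h2 : s ^ (n-1) ≤ 1 := by
                apply pow_le_one₀ hs.1.le
                calc s ≤ a := hs.2
                _ ≤ 1 := le_of_lt (by exact ha1)
              nlinarith [pow_nonneg hs.1.le (n-1)]
      _ = a := by rw [Real.volume_Ioc, ENNReal.toReal_ofReal (by linarith)]; ring
  have : Tendsto (fun a : ℝ => ((Nat.factorial (n-1)) : ℝ) - ∫ s in Ioc (0:ℝ) a, Real.exp (-s) * s ^ (n-1))
      (𝓝[>] (0:ℝ)) (𝓝 (((Nat.factorial (n-1)) : ℝ) - 0)) := (tendsto_const_nhds).sub htail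
  rw [sub_zero] at this
  apply this.congr'
  filter_upwards [self_mem_nhdsWithin] with a ha
  exact (hsplit a ha).symm

lemma image_exp_Ioi (b : ℝ) (hb : 0 < b) :
    (fun t : ℝ => b * Real.exp t) '' Ioi 0 = Ioi b := by
  ext y
  simp only [mem_image, mem_Ioi]
  constructor
  · rintro ⟨t, ht, rfl⟩
    have : 1 < Real.exp t := by
      calc (1:ℝ) = Real.exp 0 := Real.exp_zero.symm
      _ < Real.exp t := Real.exp_lt_exp.2 ht
    nlinarith
  · intro hy
    refine ⟨Real.log (y / b), ?_, ?_⟩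
    · apply Real.log_pos
      rw [lt_div_iff₀ hb]; linarith
    · rw [Real.exp_log (div_pos (hb.trans hy) hb)]
      field_simp

lemma subst_exp (b : ℝ) (hb : 0 < b) (n : ℕ) (hn : 1 ≤ n) :
    ∫ s in Ioi b, Real.exp (-s) * s ^ (n-1)
      = b ^ n * ∫ t in Ioi (0:ℝ), Real.exp (-(b * Real.exp t)) * Real.exp ((n:ℝ) * t) := by
  have h := integral_image_eq_integral_abs_deriv_smul (s := Ioi (0:ℝ)) (f := fun t : ℝ => b * Real.exp t)
    (f' := fun t : ℝ => b * Real.exp t) measurableSet_Ioi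
    (fun t _ => ((Real.hasDerivAt_exp t).const_mul b).hasDerivWithinAt)
    (fun t1 _ t2 _ h => by
      have := mul_left_cancel₀ (ne_of_gt hb) h
      exact Real.exp_injective this)
    (fun s => Real.exp (-s) * s ^ (n-1))
  rw [image_exp_Ioi b hb] at h
  rw [h, ← MeasureTheory.integral_const_mul]
  apply setIntegral_congr_fun measurableSet_Ioi
  intro t _
  have he : (0:ℝ) < b * Real.exp t := by positivity
  have key : b * Real.exp t * (b * Real.exp t) ^ (n-1) = (b * Real.exp t) ^ n := by
    rw [← pow_succ']
    congr 1
    omega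
  have hh : Real.exp ((n:ℝ) * t) = Real.exp t ^ n := Real.exp_nat_mul t n
  simp only [smul_eq_mul, abs_of_pos he, hh]
  rw [show b ^ n * (Real.exp (-(b * Real.exp t)) * Real.exp t ^ n)
      = (b * Real.exp t) ^ n * Real.exp (-(b * Real.exp t)) from by rw [mul_pow]; ring, ← key]
  ring

lemma integrable_exp_lin (ν : ℝ) {x : ℝ} (hx : 0 < x) :
    IntegrableOn (fun t => Real.exp (-x * Real.cosh t) * Real.exp (ν * t)) (Ioi (0:ℝ)) := by
  refine integrable_exp_cosh_mul (a := |ν|) hx (by continuity) (fun t ht => ?_)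
  rw [abs_of_nonneg (Real.exp_pos _).le]
  exact Real.exp_le_exp.2 (by nlinarith [le_abs_self ν, abs_nonneg ν])

lemma integrable_A0 {b : ℝ} (hb : 0 < b) (n : ℕ) :
    IntegrableOn (fun t => Real.exp (-(b * Real.exp t)) * Real.exp ((n:ℝ) * t)) (Ioi (0:ℝ)) := by
  apply (master_integrable b n hb).mono' (by exact (Continuous.aestronglyMeasurable (by continuity)).restrict)
  filter_upwards [ae_restrict_mem measurableSet_Ioi] with t ht
  have h0 : (0:ℝ) ≤ t := le_of_lt ht
  rw [Real.norm_eq_abs, abs_mul, abs_of_nonneg (Real.exp_pos _).le,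
    abs_of_nonneg (Real.exp_pos _).le, ← Real.exp_add]
  apply Real.exp_le_exp.2
  have hc : Real.cosh t ≤ Real.exp t := by
    calc Real.cosh t ≤ Real.exp |t| := cosh_le_exp_abs t
    _ = Real.exp t := by rw [abs_of_nonneg h0]
  nlinarith

lemma bessel_split {x : ℝ} (hx : 0 < x) (n : ℕ) :
    besselK (n:ℝ) x
      = ((∫ t in Ioi (0:ℝ), Real.exp (-x * Real.cosh t) * Real.exp ((n:ℝ) * t))
        + ∫ t in Ioi (0:ℝ), Real.exp (-x * Real.cosh t) * Real.exp (-(n:ℝ) * t)) / 2 := by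
  unfold besselK
  rw [← MeasureTheory.integral_add (integrable_exp_lin _ hx) (integrable_exp_lin _ hx), ← integral_div]
  apply setIntegral_congr_fun measurableSet_Ioi
  intro t _
  simp only
  rw [neg_mul ((n:ℝ)) t, Real.cosh_eq ((n:ℝ) * t)]
  ring

lemma bessel_limit (n : ℕ) (hn : 1 ≤ n) :
    Tendsto (fun x => x ^ n * besselK (n:ℝ) x) (𝓝[>] (0:ℝ))
      (𝓝 ((2:ℝ) ^ (n-1) * (Nat.factorial (n-1) : ℝ))) := by
  set A : ℝ → ℝ := fun x =>
    x ^ n / 2 * ∫ t in Ioi (0:ℝ), Real.exp (-x * Real.cosh t) * Real.exp ((n:ℝ) * t) with hA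
  set B : ℝ → ℝ := fun x =>
    x ^ n / 2 * ∫ t in Ioi (0:ℝ), Real.exp (-x * Real.cosh t) * Real.exp (-(n:ℝ) * t) with hB
  have hsplit : ∀ x : ℝ, 0 < x → x ^ n * besselK (n:ℝ) x = A x + B x := by
    intro x hx
    rw [bessel_split hx n, hA, hB]
    simp only
    ring
  -- B tends to 0
  have hBle : ∀ x : ℝ, 0 < x → ‖B x‖ ≤ x ^ n / 2 := by
    intro x hx
    have h1 : (0:ℝ) ≤ ∫ t in Ioi (0:ℝ), Real.exp (-x * Real.cosh t) * Real.exp (-(n:ℝ) * t) :=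
      setIntegral_nonneg measurableSet_Ioi (fun t _ => by positivity)
    have h2 : (∫ t in Ioi (0:ℝ), Real.exp (-x * Real.cosh t) * Real.exp (-(n:ℝ) * t))
        ≤ ∫ t in Ioi (0:ℝ), Real.exp (-t) := by
      have hexp1 : IntegrableOn (fun t : ℝ => Real.exp (-t)) (Ioi (0:ℝ)) := by
        simpa using exp_neg_integrableOn_Ioi (0:ℝ) (one_pos)
      apply setIntegral_mono_on (integrable_exp_lin _ hx) hexp1 measurableSet_Ioi
      intro t ht
      calc Real.exp (-x * Real.cosh t) * Real.exp (-(n:ℝ) * t)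
          ≤ 1 * Real.exp (-(n:ℝ) * t) := by
            apply mul_le_mul_of_nonneg_right _ (Real.exp_pos _).le
            apply Real.exp_le_one_iff.2
            have := Real.cosh_pos t
            nlinarith
      _ = Real.exp (-(n:ℝ) * t) := one_mul _
      _ ≤ Real.exp (-t) := by
            apply Real.exp_le_exp.2
            have h1n : (1:ℝ) ≤ (n:ℝ) := by exact_mod_cast hn
            nlinarith [le_of_lt (mem_Ioi.1 ht)]
    have h3 : (∫ t in Ioi (0:ℝ), Real.exp (-t)) = 1 := by
      simpa using integral_exp_neg_Ioi (0:ℝ)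
    rw [Real.norm_eq_abs, hB]
    simp only
    rw [abs_mul, abs_of_nonneg (by positivity : (0:ℝ) ≤ x ^ n / 2), abs_of_nonneg h1]
    nlinarith [pow_pos hx n]
  have hBtend : Tendsto B (𝓝[>] (0:ℝ)) (𝓝 0) := by
    have htg : Tendsto (fun x : ℝ => x ^ n / 2) (𝓝[>] (0:ℝ)) (𝓝 0) := by
      have : Tendsto (fun x : ℝ => x ^ n / 2) (𝓝 0) (𝓝 ((0:ℝ) ^ n / 2)) :=
        ((continuous_pow n).div_const 2).tendsto 0
      rw [zero_pow (by omega), zero_div] at this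
      exact this.mono_left nhdsWithin_le_nhds
    refine squeeze_zero_norm' ?_ htg
    filter_upwards [self_mem_nhdsWithin] with x hx
    exact hBle x hx
  -- A: squeeze
  set A₀ : ℝ → ℝ := fun x =>
    x ^ n / 2 * ∫ t in Ioi (0:ℝ), Real.exp (-(x/2 * Real.exp t)) * Real.exp ((n:ℝ) * t) with hA₀
  have hA₀eq : ∀ x : ℝ, 0 < x →
      A₀ x = 2 ^ (n-1) * ∫ s in Ioi (x/2), Real.exp (-s) * s ^ (n-1) := by
    intro x hx
    have hb : (0:ℝ) < x/2 := by linarith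
    rw [hA₀]
    simp only
    rw [show (∫ t in Ioi (0:ℝ), Real.exp (-(x/2 * Real.exp t)) * Real.exp ((n:ℝ) * t))
        = (x/2)⁻¹ ^ n * ∫ s in Ioi (x/2), Real.exp (-s) * s ^ (n-1) from by
      rw [subst_exp (x/2) hb n hn]
      rw [← mul_assoc, ← mul_pow, inv_mul_cancel₀ (ne_of_gt hb), one_pow, one_mul]]
    rw [← mul_assoc]
    congr 1
    have h2x : ((x/2)⁻¹) ^ n = 2 ^ n / x ^ n := by
      rw [show (x/2)⁻¹ = 2/x from by field_simp, div_pow]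
    rw [h2x]
    have hxn : x ^ n ≠ 0 := by positivity
    field_simp
    rw [show (2:ℝ) ^ n = 2 ^ (n-1) * 2 from by rw [← pow_succ]; congr 1; omega]
    ring
  have hA₀tend : Tendsto A₀ (𝓝[>] (0:ℝ)) (𝓝 ((2:ℝ) ^ (n-1) * (Nat.factorial (n-1) : ℝ))) := by
    have hhalf : Tendsto (fun x : ℝ => x / 2) (𝓝[>] (0:ℝ)) (𝓝[>] (0:ℝ)) := by
      rw [tendsto_nhdsWithin_iff]
      constructor
      · have : Tendsto (fun x : ℝ => x / 2) (𝓝 0) (𝓝 (0/2)) := (continuous_id.div_const 2).tendsto 0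
        rw [zero_div] at this
        exact this.mono_left nhdsWithin_le_nhds
      · filter_upwards [self_mem_nhdsWithin] with x hx
        exact mem_Ioi.2 (by simpa using half_pos (mem_Ioi.1 hx))
    have := ((gamma_tail_tendsto n hn).comp hhalf).const_mul ((2:ℝ) ^ (n-1))
    apply this.congr'
    filter_upwards [self_mem_nhdsWithin] with x hx
    exact (hA₀eq x hx).symm
  have hAsq : ∀ x : ℝ, 0 < x → Real.exp (-(x/2)) * A₀ x ≤ A x ∧ A x ≤ A₀ x := by
    intro x hx
    have hintA : IntegrableOn (fun t => Real.exp (-x * Real.cosh t) * Real.exp ((n:ℝ) * t))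
        (Ioi (0:ℝ)) := integrable_exp_lin _ hx
    have hintA₀ : IntegrableOn (fun t => Real.exp (-(x/2 * Real.exp t)) * Real.exp ((n:ℝ) * t))
        (Ioi (0:ℝ)) := integrable_A0 (by linarith) n
    have hptwise : ∀ t ∈ Ioi (0:ℝ),
        Real.exp (-(x/2)) * (Real.exp (-(x/2 * Real.exp t)) * Real.exp ((n:ℝ) * t))
          ≤ Real.exp (-x * Real.cosh t) * Real.exp ((n:ℝ) * t) ∧
        Real.exp (-x * Real.cosh t) * Real.exp ((n:ℝ) * t)
          ≤ Real.exp (-(x/2 * Real.exp t)) * Real.exp ((n:ℝ) * t) := by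
      intro t ht
      have h0 : (0:ℝ) ≤ t := le_of_lt ht
      have hcosh : Real.cosh t = (Real.exp t + Real.exp (-t)) / 2 := Real.cosh_eq t
      have hexpt : Real.exp (-t) ≤ 1 := Real.exp_le_one_iff.2 (by linarith)
      constructor
      · rw [← mul_assoc, ← Real.exp_add]
        apply mul_le_mul_of_nonneg_right _ (Real.exp_pos _).le
        apply Real.exp_le_exp.2
        rw [hcosh]
        nlinarith
      · apply mul_le_mul_of_nonneg_right _ (Real.exp_pos _).le
        apply Real.exp_le_exp.2
        rw [hcosh]
        nlinarith [Real.exp_pos (-t)]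
    have hI1 : (∫ t in Ioi (0:ℝ), Real.exp (-(x/2))
          * (Real.exp (-(x/2 * Real.exp t)) * Real.exp ((n:ℝ) * t)))
        ≤ ∫ t in Ioi (0:ℝ), Real.exp (-x * Real.cosh t) * Real.exp ((n:ℝ) * t) :=
      setIntegral_mono_on (hintA₀.const_mul _) hintA measurableSet_Ioi
        (fun t ht => (hptwise t ht).1)
    have hI2 : (∫ t in Ioi (0:ℝ), Real.exp (-x * Real.cosh t) * Real.exp ((n:ℝ) * t))
        ≤ ∫ t in Ioi (0:ℝ), Real.exp (-(x/2 * Real.exp t)) * Real.exp ((n:ℝ) * t) :=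
      setIntegral_mono_on hintA hintA₀ measurableSet_Ioi (fun t ht => (hptwise t ht).2)
    rw [MeasureTheory.integral_const_mul] at hI1
    constructor
    · rw [hA, hA₀]
      simp only
      have hxn : (0:ℝ) ≤ x ^ n / 2 := by positivity
      calc Real.exp (-(x/2)) * (x ^ n / 2
            * ∫ t in Ioi (0:ℝ), Real.exp (-(x/2 * Real.exp t)) * Real.exp ((n:ℝ) * t))
          = x ^ n / 2 * (Real.exp (-(x/2))
            * ∫ t in Ioi (0:ℝ), Real.exp (-(x/2 * Real.exp t)) * Real.exp ((n:ℝ) * t)) := by ring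
      _ ≤ x ^ n / 2 * ∫ t in Ioi (0:ℝ), Real.exp (-x * Real.cosh t) * Real.exp ((n:ℝ) * t) :=
          mul_le_mul_of_nonneg_left hI1 hxn
    · exact mul_le_mul_of_nonneg_left hI2 (by positivity)
  have hAtend : Tendsto A (𝓝[>] (0:ℝ)) (𝓝 ((2:ℝ) ^ (n-1) * (Nat.factorial (n-1) : ℝ))) := by
    have hlow : Tendsto (fun x => Real.exp (-(x/2)) * A₀ x) (𝓝[>] (0:ℝ))
        (𝓝 (1 * ((2:ℝ) ^ (n-1) * (Nat.factorial (n-1) : ℝ)))) := by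
      apply Tendsto.mul _ hA₀tend
      have h1 : Tendsto (fun x : ℝ => Real.exp (-(x/2))) (𝓝 0) (𝓝 (Real.exp (-(0/2)))) :=
        ((Real.continuous_exp.comp (by continuity)).tendsto 0)
      norm_num at h1
      exact h1.mono_left nhdsWithin_le_nhds
    rw [one_mul] at hlow
    apply tendsto_of_tendsto_of_tendsto_of_le_of_le' hlow hA₀tend
    · filter_upwards [self_mem_nhdsWithin] with x hx
      exact (hAsq x hx).1
    · filter_upwards [self_mem_nhdsWithin] with x hx
      exact (hAsq x hx).2
  have hfin := hAtend.add hBtend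
  rw [add_zero] at hfin
  apply hfin.congr'
  filter_upwards [self_mem_nhdsWithin] with x hx
  exact (hsplit x hx).symm

theorem stmt9 (c : ℝ) (hc : 0 < c) (u : ℕ) (hu : 0 < u) (r : ℝ) (hr : 0 < r) :
    ∫ x in (0 : ℝ)..r,
        4 * c ^ (((u : ℝ) + 1) / 2) / (Nat.factorial (u - 1) : ℝ) * x ^ u *
          besselK ((u : ℝ) - 1) (2 * Real.sqrt c * x) =
      1 - 2 / (Nat.factorial (u - 1) : ℝ) * (Real.sqrt c * r) ^ u *
            besselK u (2 * Real.sqrt c * r) := by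
  have hs : 0 < Real.sqrt c := Real.sqrt_pos.2 hc
  set a : ℝ := 2 * Real.sqrt c with ha_def
  have ha : 0 < a := by positivity
  set Kf : ℝ := (Nat.factorial (u - 1) : ℝ) with hKf
  have hKfpos : 0 < Kf := by positivity
  set C : ℝ := 2 / Kf with hC
  set f : ℝ → ℝ := fun x => 4 * c ^ (((u : ℝ) + 1) / 2) / Kf * x ^ u *
    besselK ((u : ℝ) - 1) (a * x) with hf
  set G : ℝ → ℝ := fun y => 1 - C * ((2:ℝ)⁻¹) ^ u * ((a * y) ^ u * besselK (u:ℝ) (a * y))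
    with hG
  set F : ℝ → ℝ := fun y => if y = 0 then 0 else
    1 - C * (Real.sqrt c * y) ^ u * besselK (u:ℝ) (a * y) with hF
  have hFG : ∀ y : ℝ, y ≠ 0 → F y = G y := by
    intro y hy
    rw [hF, hG]
    simp only [if_neg hy]
    have : Real.sqrt c * y = 2⁻¹ * (a * y) := by rw [ha_def]; ring
    rw [this, mul_pow]
    ring
  have hpow : (Real.sqrt c) ^ (u+1) = c ^ (((u:ℝ)+1)/2) := by
    rw [Real.sqrt_eq_rpow c]
    rw [← Real.rpow_natCast (c ^ ((1:ℝ)/2)) (u+1), ← Real.rpow_mul hc.le]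
    congr 1
    push_cast
    ring
  -- derivative of F at positive points
  have hderivAll : ∀ x : ℝ, 0 < x → HasDerivAt F (f x) x := by
    intro x hx
    have hax : 0 < a * x := by positivity
    have hkey := key_hasDerivAt u hu hax
    have hlin : HasDerivAt (fun y : ℝ => a * y) a x := by
      simpa using (hasDerivAt_id x).const_mul a
    have hcomp : HasDerivAt (fun y : ℝ => (a * y) ^ u * besselK (u:ℝ) (a * y))
        (-((a * x) ^ u * besselK ((u:ℝ) - 1) (a * x)) * a) x := by
      exact HasDerivAt.comp x hkey hlin
    have hGderiv : HasDerivAt G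
        (-(C * ((2:ℝ)⁻¹) ^ u * (-((a * x) ^ u * besselK ((u:ℝ) - 1) (a * x)) * a))) x := by
      rw [hG]
      exact (hcomp.const_mul (C * ((2:ℝ)⁻¹) ^ u)).const_sub 1
    have h2 : ((2:ℝ)⁻¹) ^ u * a ^ (u+1) = 2 * Real.sqrt c ^ (u+1) := by
      rw [ha_def, mul_pow, pow_succ (2:ℝ) u]
      rw [show ((2:ℝ)⁻¹) ^ u * (2 ^ u * 2 * Real.sqrt c ^ (u+1))
          = ((2:ℝ)⁻¹ * 2) ^ u * (2 * Real.sqrt c ^ (u+1)) from by rw [mul_pow]; ring]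
      norm_num
    have hval : -(C * ((2:ℝ)⁻¹) ^ u * (-((a * x) ^ u * besselK ((u:ℝ) - 1) (a * x)) * a))
        = f x := by
      rw [hf]
      simp only
      rw [← hpow]
      calc -(C * ((2:ℝ)⁻¹) ^ u * (-((a * x) ^ u * besselK ((u:ℝ) - 1) (a * x)) * a))
          = C * (((2:ℝ)⁻¹) ^ u * (a ^ u * a)) * x ^ u * besselK ((u:ℝ) - 1) (a * x) := by
            rw [mul_pow]; ring
      _ = C * (((2:ℝ)⁻¹) ^ u * a ^ (u+1)) * x ^ u * besselK ((u:ℝ) - 1) (a * x) := by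
            rw [pow_succ]
      _ = C * (2 * Real.sqrt c ^ (u+1)) * x ^ u * besselK ((u:ℝ) - 1) (a * x) := by rw [h2]
      _ = 4 * Real.sqrt c ^ (u+1) / Kf * x ^ u * besselK ((u:ℝ) - 1) (a * x) := by
            rw [hC]; ring
    rw [← hval]
    apply hGderiv.congr_of_eventuallyEq
    filter_upwards [eventually_ne_nhds (ne_of_gt hx)] with y hy
    exact hFG y hy
  -- limit at 0
  have hlim : Tendsto F (𝓝[>] (0:ℝ)) (𝓝 0) := by
    have h1 : Tendsto (fun x : ℝ => a * x) (𝓝[>] (0:ℝ)) (𝓝[>] (0:ℝ)) := by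
      rw [tendsto_nhdsWithin_iff]
      constructor
      · have : Tendsto (fun x : ℝ => a * x) (𝓝 0) (𝓝 (a * 0)) :=
          ((continuous_const.mul continuous_id).tendsto 0)
        rw [mul_zero] at this
        exact this.mono_left nhdsWithin_le_nhds
      · filter_upwards [self_mem_nhdsWithin] with x hx
        exact mem_Ioi.2 (mul_pos ha (mem_Ioi.1 hx))
    have h2 := (bessel_limit u hu).comp h1
    have h3 : Tendsto G (𝓝[>] (0:ℝ))
        (𝓝 (1 - C * ((2:ℝ)⁻¹) ^ u * ((2:ℝ) ^ (u-1) * (Nat.factorial (u-1) : ℝ)))) := by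
      rw [hG]
      exact tendsto_const_nhds.sub ((h2.const_mul _))
    have hzero : 1 - C * ((2:ℝ)⁻¹) ^ u * ((2:ℝ) ^ (u-1) * (Nat.factorial (u-1) : ℝ)) = 0 := by
      rw [hC, hKf]
      have h2u : (2:ℝ) ^ (u-1) * 2 = 2 ^ u := by
        rw [← pow_succ]
        congr 1
        omega
      have h2ne : ((2:ℝ)) ^ u ≠ 0 := by positivity
      have hKne : (Nat.factorial (u-1) : ℝ) ≠ 0 := by positivity
      rw [inv_pow, ← h2u]
      field_simp
      ring
    rw [hzero] at h3
    apply h3.congr'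
    filter_upwards [self_mem_nhdsWithin] with y hy
    exact (hFG y (ne_of_gt hy)).symm
  have hF0 : F 0 = 0 := by rw [hF]; simp
  -- continuity on Icc
  have hcont : ContinuousOn F (Icc 0 r) := by
    intro y hy
    rcases eq_or_lt_of_le hy.1 with h0 | h0
    · subst h0
      have hsub : Icc (0:ℝ) r ⊆ {0} ∪ Ioi 0 := by
        intro z hz
        rcases eq_or_lt_of_le hz.1 with h | h
        · exact Or.inl (by simp [← h])
        · exact Or.inr h
      apply ContinuousWithinAt.mono _ hsub
      show Tendsto F (𝓝[({0} ∪ Ioi 0 : Set ℝ)] 0) (𝓝 (F 0))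
      rw [hF0, nhdsWithin_union, nhdsWithin_singleton, tendsto_sup]
      refine ⟨?_, hlim⟩
      simpa [hF0] using tendsto_pure_nhds F 0
    · exact ((hderivAll y h0).continuousAt).continuousWithinAt
  -- interval integrability
  have hnonneg : ∀ x : ℝ, x ∈ Ioo 0 r → 0 ≤ f x := by
    intro x hx
    rw [hf]
    simp only
    exact mul_nonneg (mul_nonneg (div_nonneg (by positivity) hKfpos.le)
      (pow_nonneg hx.1.le u)) (besselK_nonneg _ _)
  have hint : IntervalIntegrable f volume 0 r := by
    apply intervalIntegral.intervalIntegrable_deriv_of_nonneg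
    · rwa [uIcc_of_le hr.le]
    · intro x hx
      rw [min_eq_left hr.le, max_eq_right hr.le] at hx
      exact hderivAll x hx.1
    · intro x hx
      rw [min_eq_left hr.le, max_eq_right hr.le] at hx
      exact hnonneg x hx
  have hFTC := intervalIntegral.integral_eq_sub_of_hasDeriv_right_of_le hr.le hcont
    (fun x hx => (hderivAll x hx.1).hasDerivWithinAt) hint
  rw [hFTC, hF0, sub_zero, hF]
  simp only [if_neg (ne_of_gt hr)]
end
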